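/- arXiv:2403.07101 — 2 statements merged into one kernel-verified Lean document; each statement's English description precedes it below -/
import Mathlib

section
/- Combining the Lipschitz continuity of the parametric solution map with the one-step Newton-type contraction yields the predictor-corrector error bound: ‖z̄(x⁺) − z⁺‖ ≤ (κσ + (ωσ²/2)‖x⁺ − x_lin‖)‖x⁺ − x_lin‖ + (κ + ωσ‖x⁺ − x_lin‖ + (ω/2)‖z̄(x_lin) − z_lin‖)‖z̄(x_lin) − z_lin‖, where z⁺ is obtained by one Newton-type step from z_lin on F(·, x⁺). -/
/-- Predictor-corrector error bound: combining σ-Lipschitz continuity of the solution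
map with the one-step Newton-type contraction bound. -/
theorem stmt_2 {E P : Type*} [NormedAddCommGroup E] [NormedSpace ℝ E]
    [NormedAddCommGroup P] [NormedSpace ℝ P]
    (zbar : P → E) (σ κ ω : ℝ) (xplus xlin : P) (zlin zplus : E)
    (hσ : 0 ≤ σ) (hκ0 : 0 ≤ κ) (hκ1 : κ < 1) (hω : 0 ≤ ω)
    -- Lipschitz continuity of the parametric solution map
    (hLip : ∀ x x' : P, ‖zbar x - zbar x'‖ ≤ σ * ‖x - x'‖)
    -- one-step Newton-type contraction for the step from z_lin toward z̄(x⁺)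
    (hstep : ‖zbar xplus - zplus‖ ≤
      (κ + ω / 2 * ‖zbar xplus - zlin‖) * ‖zbar xplus - zlin‖) :
    ‖zbar xplus - zplus‖ ≤
      (κ * σ + ω * σ ^ 2 / 2 * ‖xplus - xlin‖) * ‖xplus - xlin‖ +
      (κ + ω * σ * ‖xplus - xlin‖ + ω / 2 * ‖zbar xlin - zlin‖) * ‖zbar xlin - zlin‖ := by
  have htri : ‖zbar xplus - zlin‖ ≤ σ * ‖xplus - xlin‖ + ‖zbar xlin - zlin‖ := by
    calc ‖zbar xplus - zlin‖ = ‖(zbar xplus - zbar xlin) + (zbar xlin - zlin)‖ := by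
          rw [sub_add_sub_cancel]
      _ ≤ ‖zbar xplus - zbar xlin‖ + ‖zbar xlin - zlin‖ := norm_add_le _ _
      _ ≤ σ * ‖xplus - xlin‖ + ‖zbar xlin - zlin‖ := by gcongr; exact hLip _ _
  set d := ‖zbar xplus - zlin‖ with hd
  set a := ‖xplus - xlin‖ with ha
  set b := ‖zbar xlin - zlin‖ with hb
  have hd0 : 0 ≤ d := norm_nonneg _
  have ha0 : 0 ≤ a := norm_nonneg _
  have hb0 : 0 ≤ b := norm_nonneg _
  have hmono : (κ + ω / 2 * d) * d ≤ (κ + ω / 2 * (σ*a+b)) * (σ*a+b) := by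
    have h2 : 0 ≤ σ*a+b := by positivity
    nlinarith [mul_nonneg hω hd0, mul_nonneg hω h2]
  calc ‖zbar xplus - zplus‖ ≤ (κ + ω / 2 * d) * d := hstep
    _ ≤ (κ + ω / 2 * (σ*a+b)) * (σ*a+b) := hmono
    _ = (κ * σ + ω * σ ^ 2 / 2 * a) * a + (κ + ω * σ * a + ω / 2 * b) * b := by ring
end

section
/- (Composite AS-RTI-D error bound) Let z_lin be obtained from z^k by N_D Newton-type iterations on the advanced problem with parameter x_pred, so that ‖z_lin − z̄(x_pred)‖ ≤ α^{N_D}‖z^k − z̄(x_pred)‖ with α = κ + (ω/2)‖z^k − z̄(x_pred)‖ < 1. Then the feedback step at parameter x⁺ satisfies ‖z̄(x⁺) − z⁺‖ ≤ (κσ + (ωσ²/2)δ)δ + (κ + ωσδ + (ω/2)α^{N_D}e)α^{N_D}e, where δ = ‖x⁺ − x_pred‖ and e = ‖z^k − z̄(x_pred)‖. -/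
theorem add_mul_mul_le_of_le {c a t T : ℝ} (hc : 0 ≤ c) (ha : 0 ≤ a) (ht : 0 ≤ t)
    (htT : t ≤ T) : (c + a * t) * t ≤ (c + a * T) * T := by
  have hT : 0 ≤ T := ht.trans htT
  gcongr

theorem stmt_12_general {E P : Type*} [NormedAddCommGroup E]
    [NormedAddCommGroup P]
    (zbar : P → E) (κ ω σ α : ℝ) (ND : ℕ) (xplus xpred : P) (zk zlin zplus : E)
    (hκ0 : 0 ≤ κ) (hω : 0 ≤ ω) (hσ : 0 ≤ σ)
    -- inner iterations contraction
    (hinner : ‖zlin - zbar xpred‖ ≤ α ^ ND * ‖zk - zbar xpred‖)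
    -- one-step predictor-corrector bound of the feedback phase
    (hfeed : ‖zbar xplus - zplus‖ ≤
      (κ * σ + ω * σ ^ 2 / 2 * ‖xplus - xpred‖) * ‖xplus - xpred‖ +
      (κ + ω * σ * ‖xplus - xpred‖ + ω / 2 * ‖zbar xpred - zlin‖) *
        ‖zbar xpred - zlin‖) :
    ‖zbar xplus - zplus‖ ≤
      (κ * σ + ω * σ ^ 2 / 2 * ‖xplus - xpred‖) * ‖xplus - xpred‖ +
      (κ + ω * σ * ‖xplus - xpred‖ + ω / 2 * (α ^ ND * ‖zk - zbar xpred‖)) *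
        (α ^ ND * ‖zk - zbar xpred‖) := by
  have hlin : ‖zbar xpred - zlin‖ ≤ α ^ ND * ‖zk - zbar xpred‖ := by
    rwa [norm_sub_rev]
  have hcoef : 0 ≤ κ + ω * σ * ‖xplus - xpred‖ := by positivity
  exact hfeed.trans <| add_le_add_right
    (add_mul_mul_le_of_le hcoef (by positivity) (norm_nonneg _) hlin) _

/-- Composite AS-RTI-D error bound: combining the N_D-step contraction of the inner
iterations with the one-step predictor-corrector feedback bound. -/
theorem stmt_12 {E P : Type*} [NormedAddCommGroup E] [NormedSpace ℝ E]
    [NormedAddCommGroup P] [NormedSpace ℝ P]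
    (zbar : P → E) (κ ω σ α : ℝ) (ND : ℕ) (xplus xpred : P) (zk zlin zplus : E)
    (hκ0 : 0 ≤ κ) (hκ1 : κ < 1) (hω : 0 ≤ ω) (hσ : 0 ≤ σ)
    (hα : α = κ + ω / 2 * ‖zk - zbar xpred‖) (hα1 : α < 1)
    -- inner iterations contraction
    (hinner : ‖zlin - zbar xpred‖ ≤ α ^ ND * ‖zk - zbar xpred‖)
    -- one-step predictor-corrector bound of the feedback phase
    (hfeed : ‖zbar xplus - zplus‖ ≤
      (κ * σ + ω * σ ^ 2 / 2 * ‖xplus - xpred‖) * ‖xplus - xpred‖ +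
      (κ + ω * σ * ‖xplus - xpred‖ + ω / 2 * ‖zbar xpred - zlin‖) *
        ‖zbar xpred - zlin‖) :
    ‖zbar xplus - zplus‖ ≤
      (κ * σ + ω * σ ^ 2 / 2 * ‖xplus - xpred‖) * ‖xplus - xpred‖ +
      (κ + ω * σ * ‖xplus - xpred‖ + ω / 2 * (α ^ ND * ‖zk - zbar xpred‖)) *
        (α ^ ND * ‖zk - zbar xpred‖) :=
  stmt_12_general zbar κ ω σ α ND xplus xpred zk zlin zplus hκ0 hω hσ hinner hfeed
end
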